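/- arXiv:math/9910010 — 6 statements merged into one kernel-verified Lean document; each statement's English description precedes it below -/
import Mathlib

section
/- Let L be the twisted group algebra of π associated with a normalized 2-cocycle θ with values in K*, with the action φ of π determined by φ_β(l_α)·l_β = l_β·l_α. Then for all α,β ∈ π and c ∈ L_{αβα⁻¹β⁻¹}: Tr(c·φ_β : L_α → L_α) = Tr(φ_{α⁻¹}·c : L_β → L_β). -/
/-- Twisted group algebra multiplication on `G →₀ K`: `l_α · l_β = θ_{α,β} · l_{αβ}`. -/
noncomputable def twistedMul {K : Type*} [CommRing K] {G : Type*} [Group G]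
    (θ : G → G → Kˣ) (a b : G →₀ K) : G →₀ K :=
  a.sum fun α x => b.sum fun β y => Finsupp.single (α * β) (x * y * (θ α β : K))

section helpers
variable {K : Type*} [CommRing K] {G : Type*} [Group G] (θ : G → G → Kˣ)

lemma tm_single_single (a b : G) (x y : K) :
    twistedMul θ (Finsupp.single a x) (Finsupp.single b y) =
      Finsupp.single (a * b) (x * y * (θ a b : K)) := by
  classical
  simp [twistedMul, Finsupp.sum_single_index]

lemma tm_apply_right (u : G →₀ K) (b γ : G) (y : K) :
    (twistedMul θ u (Finsupp.single b y)) γ = u (γ * b⁻¹) * y * (θ (γ * b⁻¹) b : K) := by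
  classical
  have : twistedMul θ u (Finsupp.single b y) =
      u.sum fun a x => Finsupp.single (a * b) (x * y * (θ a b : K)) := by
    simp [twistedMul, Finsupp.sum_single_index]
  rw [this, Finsupp.sum_apply]
  have h2 : (u.sum fun a x => (Finsupp.single (a * b) (x * y * (θ a b : K))) γ)
      = u.sum fun a x => if a = γ * b⁻¹ then x * y * (θ a b : K) else 0 := by
    apply Finsupp.sum_congr
    intro a _
    rw [Finsupp.single_apply]
    congr 1
    simp [eq_comm, eq_mul_inv_iff_mul_eq]
  rw [h2, Finsupp.sum_ite_eq']
  split_ifs with h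
  · rfl
  · rw [Finsupp.notMem_support_iff.mp h, zero_mul, zero_mul]

lemma tm_apply_left (u : G →₀ K) (a γ : G) (x : K) :
    (twistedMul θ (Finsupp.single a x) u) γ = x * u (a⁻¹ * γ) * (θ a (a⁻¹ * γ) : K) := by
  classical
  have : twistedMul θ (Finsupp.single a x) u =
      u.sum fun b y => Finsupp.single (a * b) (x * y * (θ a b : K)) := by
    rw [twistedMul, Finsupp.sum_single_index]
    simp
  rw [this, Finsupp.sum_apply]
  have h2 : (u.sum fun b y => (Finsupp.single (a * b) (x * y * (θ a b : K))) γ)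
      = u.sum fun b y => if b = a⁻¹ * γ then x * y * (θ a b : K) else 0 := by
    apply Finsupp.sum_congr
    intro b _
    rw [Finsupp.single_apply]
    congr 1
    simp [eq_comm, eq_inv_mul_iff_mul_eq]
  rw [h2, Finsupp.sum_ite_eq']
  split_ifs with h
  · rfl
  · rw [Finsupp.notMem_support_iff.mp h, mul_zero, zero_mul]

end helpers

/-- In the twisted group algebra of a normalized 2-cocycle `θ`, with the
action `φ` determined by `φ_β(l_α)·l_β = l_β·l_α`, the trace axiom
`Tr(c·φ_β : L_α → L_α) = Tr(φ_{α⁻¹}·c : L_β → L_β)` holds for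
`c = x·l_{αβα⁻¹β⁻¹} ∈ L_{αβα⁻¹β⁻¹}`.  Since each `L_γ` is free of rank 1 with basis
`l_γ`, both endomorphisms are scalar multiplications and their traces are the
scalars `k` and `k'` determined by `c·φ_β(l_α) = k·l_α` and
`φ_{α⁻¹}(c·l_β) = k'·l_β`; the statement says `k = k'`. -/
theorem twisted_group_algebra_trace_axiom {K : Type*} [CommRing K] {G : Type*} [Group G]
    (θ : G → G → Kˣ)
    (hcoc : ∀ α β γ : G, θ α β * θ (α * β) γ = θ α (β * γ) * θ β γ)
    (hnorm : θ 1 1 = 1) :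
    ∀ (α β : G) (x k k' : K) (u : G →₀ K),
      -- `u = φ_β(l_α)` is determined by `φ_β(l_α)·l_β = l_β·l_α`
      twistedMul θ u (Finsupp.single β (1 : K)) =
        twistedMul θ (Finsupp.single β (1 : K)) (Finsupp.single α (1 : K)) →
      -- `k` is determined by `c·φ_β(l_α) = k·l_α`, where `c = x·l_{αβα⁻¹β⁻¹}`
      twistedMul θ (Finsupp.single (α * β * α⁻¹ * β⁻¹) x) u = Finsupp.single α k →
      -- `k'` is determined by `φ_{α⁻¹}(c·l_β) = k'·l_β`, i.e.
      -- `(k'·l_β)·l_{α⁻¹} = l_{α⁻¹}·(c·l_β)`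
      twistedMul θ (Finsupp.single β k') (Finsupp.single α⁻¹ (1 : K)) =
        twistedMul θ (Finsupp.single α⁻¹ (1 : K))
          (twistedMul θ (Finsupp.single (α * β * α⁻¹ * β⁻¹) x)
            (Finsupp.single β (1 : K))) →
      k = k' := by
  intro α β x k k' u h1 h2 h3
  -- K-valued cocycle
  have hK : ∀ a b c : G, (θ a b : K) * (θ (a * b) c : K) = (θ a (b * c) : K) * (θ b c : K) := by
    intro a b c
    exact_mod_cast congrArg Units.val (hcoc a b c)
  -- normalization consequences
  have hg1 : ∀ g : G, (θ g 1 : K) = 1 := by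
    intro g
    have h := hcoc g 1 1
    simp [hnorm] at h
    rw [h, Units.val_one]
  have h1g : ∀ g : G, (θ 1 g : K) = 1 := by
    intro g
    have h := hcoc 1 1 g
    simp [hnorm] at h
    rw [h, Units.val_one]
  -- coordinate extraction
  have e1 := DFunLike.congr_fun h1 (β * α)
  rw [tm_apply_right, tm_single_single, Finsupp.single_eq_same] at e1
  have e2 := DFunLike.congr_fun h2 α
  rw [tm_apply_left, Finsupp.single_eq_same,
    show (α * β * α⁻¹ * β⁻¹)⁻¹ * α = β * α * β⁻¹ from by group] at e2
  rw [tm_single_single, tm_single_single, tm_single_single,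
    show α * β * α⁻¹ * β⁻¹ * β = α * β * α⁻¹ from by group,
    show α⁻¹ * (α * β * α⁻¹) = β * α⁻¹ from by group] at h3
  have e3 := DFunLike.congr_fun h3 (β * α⁻¹)
  rw [Finsupp.single_eq_same, Finsupp.single_eq_same] at e3
  -- abbreviations
  set u0 : K := u (β * α * β⁻¹) with hu0
  -- cocycle instances
  have E1 := hK (α * β * α⁻¹ * β⁻¹) (β * α * β⁻¹) β
  rw [show α * β * α⁻¹ * β⁻¹ * (β * α * β⁻¹) = α from by group,
    show β * α * β⁻¹ * β = β * α from by group] at E1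
  have E2 := hK (α * β * α⁻¹ * β⁻¹) β α
  rw [show α * β * α⁻¹ * β⁻¹ * β = α * β * α⁻¹ from by group] at E2
  have E3 := hK α⁻¹ (α * β * α⁻¹) α
  rw [show α⁻¹ * (α * β * α⁻¹) = β * α⁻¹ from by group,
    show α * β * α⁻¹ * α = α * β from by group] at E3
  have E4 := hK β α⁻¹ α
  rw [show α⁻¹ * α = (1 : G) from by group, hg1 β, one_mul] at E4
  have E5 := hK α⁻¹ α β
  rw [show α⁻¹ * α = (1 : G) from by group, h1g β, mul_one] at E5
  -- the multiplier we cancel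
  have hM : IsUnit ((θ (β * α * β⁻¹) β : K) * (θ β α⁻¹ : K) * (θ α β : K)
      * (θ (β * α⁻¹) α : K)) := by
    exact ⟨θ (β * α * β⁻¹) β * θ β α⁻¹ * θ α β * θ (β * α⁻¹) α, by push_cast; ring⟩
  apply hM.mul_right_cancel
  calc k * ((θ (β * α * β⁻¹) β : K) * (θ β α⁻¹ : K) * (θ α β : K) * (θ (β * α⁻¹) α : K))
      = x * u0 * (θ (α * β * α⁻¹ * β⁻¹) (β * α * β⁻¹) : K) * (θ (β * α * β⁻¹) β : K)
        * (θ β α⁻¹ : K) * (θ α β : K) * (θ (β * α⁻¹) α : K) := by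
        linear_combination (-((θ (β * α * β⁻¹) β : K) * (θ β α⁻¹ : K) * (θ α β : K)
          * (θ (β * α⁻¹) α : K))) * e2
    _ = x * (θ β α : K) * (θ (α * β * α⁻¹ * β⁻¹) (β * α * β⁻¹) : K)
        * (θ β α⁻¹ : K) * (θ α β : K) * (θ (β * α⁻¹) α : K) := by
        linear_combination (x * (θ (α * β * α⁻¹ * β⁻¹) (β * α * β⁻¹) : K)
          * (θ β α⁻¹ : K) * (θ α β : K) * (θ (β * α⁻¹) α : K)) * e1
    _ = x * (θ β α : K) * (θ (α * β * α⁻¹ * β⁻¹) (β * α) : K) * (θ (β * α * β⁻¹) β : K)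
        * (θ β α⁻¹ : K) * (θ (β * α⁻¹) α : K) := by
        linear_combination (x * (θ β α : K) * (θ β α⁻¹ : K) * (θ (β * α⁻¹) α : K)) * E1
    _ = x * (θ β α : K) * (θ (α * β * α⁻¹ * β⁻¹) (β * α) : K) * (θ (β * α * β⁻¹) β : K)
        * (θ α⁻¹ α : K) := by
        linear_combination (x * (θ β α : K) * (θ (α * β * α⁻¹ * β⁻¹) (β * α) : K)
          * (θ (β * α * β⁻¹) β : K)) * E4
    _ = x * (θ β α : K) * (θ (α * β * α⁻¹ * β⁻¹) (β * α) : K) * (θ (β * α * β⁻¹) β : K)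
        * (θ α⁻¹ (α * β) : K) * (θ α β : K) := by
        linear_combination (x * (θ β α : K) * (θ (α * β * α⁻¹ * β⁻¹) (β * α) : K)
          * (θ (β * α * β⁻¹) β : K)) * E5
    _ = x * (θ (α * β * α⁻¹ * β⁻¹) β : K) * (θ (α * β * α⁻¹) α : K)
        * (θ (β * α * β⁻¹) β : K) * (θ α⁻¹ (α * β) : K) * (θ α β : K) := by
        linear_combination (-(x * (θ (β * α * β⁻¹) β : K) * (θ α⁻¹ (α * β) : K)
          * (θ α β : K))) * E2
    _ = x * (θ (α * β * α⁻¹ * β⁻¹) β : K) * (θ α⁻¹ (α * β * α⁻¹) : K)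
        * (θ (β * α⁻¹) α : K) * (θ (β * α * β⁻¹) β : K) * (θ α β : K) := by
        linear_combination (-(x * (θ (α * β * α⁻¹ * β⁻¹) β : K)
          * (θ (β * α * β⁻¹) β : K) * (θ α β : K))) * E3
    _ = k' * ((θ (β * α * β⁻¹) β : K) * (θ β α⁻¹ : K) * (θ α β : K)
        * (θ (β * α⁻¹) α : K)) := by
        linear_combination (-((θ (β * α * β⁻¹) β : K) * (θ α β : K)
          * (θ (β * α⁻¹) α : K))) * e3
end

section
/- Let L be a biangular π-algebra, α ∈ π, and b_α = Σᵢ pᵢ ⊗ qᵢ ∈ L_α ⊗ L_{α⁻¹} the canonical copairing element for the non-degenerate form η(a,b) = Tr(μ_{ab}|_{L_1}). Then Σᵢ pᵢ·qᵢ = 1_L. -/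
/-- A `G`-algebra (`G`-graded associative unital `K`-algebra with projective
finite-type components), realized as a grading of an ambient algebra `A` by
submodules. -/
structure GradedPiAlgebra (K : Type*) [CommRing K] (A : Type*) [Ring A] [Algebra K A]
    (G : Type*) [Group G] [DecidableEq G] where
  comp : G → Submodule K A
  one_mem : (1 : A) ∈ comp 1
  mul_mem : ∀ {α β : G} {a b : A}, a ∈ comp α → b ∈ comp β → a * b ∈ comp (α * β)
  internal : DirectSum.IsInternal comp
  projective : ∀ α : G, Module.Projective K (comp α)
  finite : ∀ α : G, Module.Finite K (comp α)

/-- A biangular `G`-algebra: a `G`-algebra `L` such that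
(i) for every `ℓ ∈ L_1` and `α ∈ G`, `Tr(μ_ℓ|_{L_α}) = Tr(μ_ℓ|_{L_1})`, and
(ii) for every `α`, the bilinear form `η(a,b) = Tr(μ_{ab}|_{L_1})` on
`L_α ⊗ L_{α⁻¹}` is non-degenerate (both adjoint maps are bijective).
Here `μ_ℓ` is left multiplication by `ℓ`, and restrictions of left multiplications
to components are encoded as linear endomorphisms `f` of the component whose
values agree with the multiplication. -/
structure BiangularAlgebra (K : Type*) [CommRing K] (A : Type*) [Ring A] [Algebra K A]
    (G : Type*) [Group G] [DecidableEq G] extends GradedPiAlgebra K A G where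
  trace_cond : ∀ (α : G) {ℓ : A}, ℓ ∈ comp 1 →
    ∀ (f : comp α →ₗ[K] comp α) (g : comp 1 →ₗ[K] comp 1),
      (∀ x : comp α, (f x : A) = ℓ * (x : A)) →
      (∀ x : comp 1, (g x : A) = ℓ * (x : A)) →
      LinearMap.trace K (comp α) f = LinearMap.trace K (comp 1) g
  nondeg : ∀ α : G, ∃ B : comp α →ₗ[K] (comp α⁻¹ →ₗ[K] K),
    (∀ (a : comp α) (b : comp α⁻¹) (f : comp 1 →ₗ[K] comp 1),
      (∀ x : comp 1, (f x : A) = (a : A) * (b : A) * (x : A)) →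
      B a b = LinearMap.trace K (comp 1) f) ∧
    Function.Bijective B ∧ Function.Bijective B.flip

/-! For `ℓ ∈ L_1`, expanding `μ_ℓ|_{L_α}` through the copairing gives
`Tr(μ_ℓ|_{L_α}) = Σᵢ η(ℓ pᵢ, qᵢ) = Tr(μ_{ℓ u}|_{L_1})` with `u = Σᵢ pᵢ qᵢ ∈ L_1`, while the trace
condition gives `Tr(μ_ℓ|_{L_α}) = Tr(μ_ℓ|_{L_1})`. Hence `η(ℓ, u) = η(ℓ, 1)` for every `ℓ ∈ L_1`,
and non-degeneracy of `η` on `L_1 ⊗ L_1` forces `u = 1`. -/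

namespace LinearMap

variable {R M : Type*} [CommRing R] [AddCommGroup M] [Module R M]

theorem trace_eq_zero_of_not_free (h : ¬Module.Free R M) : trace R M = 0 := by
  classical
  rw [trace, dif_neg]
  rintro ⟨s, ⟨b⟩⟩
  exact h (.of_basis b)

theorem trace_eq_sum_of_eq_sum_smul [Module.Free R M] [Module.Finite R M] {ι : Type*} [Fintype ι]
    (φ : ι → Module.Dual R M) (m : ι → M) (hrep : ∀ x, x = ∑ i, φ i x • m i) (f : M →ₗ[R] M) :
    trace R M f = ∑ i, φ i (f (m i)) := by
  have hf : f = ∑ i, (φ i).smulRight (f (m i)) := by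
    ext x
    conv_lhs => rw [hrep x]
    simp
  conv_lhs => rw [hf]
  simp only [map_sum, trace_smulRight]

end LinearMap

noncomputable section

namespace GradedPiAlgebra

variable {K A G : Type*} [CommRing K] [Ring A] [Algebra K A] [Group G] [DecidableEq G]
  (S : GradedPiAlgebra K A G)

theorem mul_mem_of_mul_eq {β γ δ : G} {a b : A} (ha : a ∈ S.comp β) (hb : b ∈ S.comp γ)
    (h : β * γ = δ) : a * b ∈ S.comp δ :=
  h ▸ S.mul_mem ha hb

def mulLeftOn (β : G) {ℓ : A} (hℓ : ℓ ∈ S.comp 1) : Module.End K (S.comp β) :=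
  (LinearMap.mulLeft K ℓ).restrict fun _ hx => S.mul_mem_of_mul_eq hℓ hx (one_mul β)

@[simp]
theorem coe_mulLeftOn_apply (β : G) {ℓ : A} (hℓ : ℓ ∈ S.comp 1) (x : S.comp β) :
    (S.mulLeftOn β hℓ x : A) = ℓ * x :=
  rfl

def proj (β : G) : A →ₗ[K] S.comp β :=
  DirectSum.component K G (fun γ => S.comp γ) β ∘ₗ
    (LinearEquiv.ofBijective (DirectSum.coeLinearMap S.comp) S.internal).symm.toLinearMap

theorem proj_of_mem {β : G} {a : A} (ha : a ∈ S.comp β) : S.proj β a = ⟨a, ha⟩ :=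
  S.internal.ofBijective_coeLinearMap_of_mem ha

/-- `a ↦ Tr(μ_a|_{L_1})`, extended linearly to all of `A` by projecting onto `L_1`. -/
def traceOne : A →ₗ[K] K where
  toFun a := LinearMap.trace K (S.comp 1) (S.proj 1 ∘ₗ LinearMap.mulLeft K a ∘ₗ (S.comp 1).subtype)
  map_add' a b := by
    rw [← map_add]
    congr 1
    ext
    simp [add_mul]
  map_smul' c a := by
    rw [RingHom.id_apply, ← map_smul]
    congr 1
    ext
    simp

theorem traceOne_of_mem {ℓ : A} (hℓ : ℓ ∈ S.comp 1) :
    S.traceOne ℓ = LinearMap.trace K (S.comp 1) (S.mulLeftOn 1 hℓ) := by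
  refine congrArg _ (LinearMap.ext fun x => ?_)
  exact S.proj_of_mem _

theorem trace_mulLeftOn_of_copairing {α : G} [Module.Free K (S.comp α)] {n : ℕ} {p q : Fin n → A}
    (hp : ∀ i, p i ∈ S.comp α) (hrep : ∀ a ∈ S.comp α, a = ∑ i, S.traceOne (a * q i) • p i)
    {ℓ : A} (hℓ : ℓ ∈ S.comp 1) :
    LinearMap.trace K (S.comp α) (S.mulLeftOn α hℓ) = S.traceOne (ℓ * ∑ i, p i * q i) := by
  have := S.finite α
  let φ i : Module.Dual K (S.comp α) :=
    S.traceOne ∘ₗ LinearMap.mulRight K (q i) ∘ₗ (S.comp α).subtype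
  have hrep' : ∀ x : S.comp α, x = ∑ i, φ i x • ⟨p i, hp i⟩ := fun x =>
    Subtype.ext <| by simpa [φ] using hrep x x.2
  rw [LinearMap.trace_eq_sum_of_eq_sum_smul φ _ hrep', Finset.mul_sum, map_sum]
  simp [φ, mul_assoc]

theorem sum_mul_mem_one {α : G} {n : ℕ} {p q : Fin n → A} (hp : ∀ i, p i ∈ S.comp α)
    (hq : ∀ i, q i ∈ S.comp α⁻¹) : ∑ i, p i * q i ∈ S.comp 1 :=
  Submodule.sum_mem _ fun i _ => S.mul_mem_of_mul_eq (hp i) (hq i) (mul_inv_cancel α)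

end GradedPiAlgebra

end

namespace BiangularAlgebra

variable {K A G : Type*} [CommRing K] [Ring A] [Algebra K A] [Group G] [DecidableEq G]
  (S : BiangularAlgebra K A G)

theorem trace_mulLeftOn (β : G) {ℓ : A} (hℓ : ℓ ∈ S.comp 1) :
    LinearMap.trace K (S.comp β) (S.mulLeftOn β hℓ) = S.traceOne ℓ :=
  (S.traceOne_of_mem hℓ).symm ▸ S.trace_cond β hℓ _ _ (fun _ => rfl) (fun _ => rfl)

theorem eq_of_forall_traceOne_mul_eq {x y : A} (hx : x ∈ S.comp 1) (hy : y ∈ S.comp 1)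
    (h : ∀ ℓ ∈ S.comp 1, S.traceOne (ℓ * x) = S.traceOne (ℓ * y)) : x = y := by
  obtain ⟨B, hB, -, hBflip⟩ := S.nondeg 1
  have hBtrace : ∀ (ℓ : S.comp 1) (z : S.comp (1 : G)⁻¹), B ℓ z = S.traceOne (ℓ * z) :=
    fun ℓ z => by
      have hℓz := S.mul_mem_of_mul_eq ℓ.2 z.2 (mul_inv_cancel 1)
      rw [S.traceOne_of_mem hℓz]
      exact hB ℓ z _ fun _ => rfl
  rw [← inv_one] at hx hy
  have : (⟨x, hx⟩ : S.comp (1 : G)⁻¹) = ⟨y, hy⟩ :=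
    hBflip.injective <| LinearMap.ext fun ℓ => by simpa [hBtrace] using h ℓ ℓ.2
  exact congrArg Subtype.val this

theorem traceOne_mul_copairing {α : G} {n : ℕ} {p q : Fin n → A}
    (hp : ∀ i, p i ∈ S.comp α) (hq : ∀ i, q i ∈ S.comp α⁻¹)
    (hrep : ∀ a ∈ S.comp α, a = ∑ i, S.traceOne (a * q i) • p i) {ℓ : A} (hℓ : ℓ ∈ S.comp 1) :
    S.traceOne (ℓ * ∑ i, p i * q i) = S.traceOne ℓ := by
  have hℓu := S.mul_mem_of_mul_eq hℓ (S.sum_mul_mem_one hp hq) (one_mul 1)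
  rw [← S.trace_mulLeftOn α hℓ]
  by_cases hfree : Module.Free K (S.comp α)
  · exact (S.trace_mulLeftOn_of_copairing hp hrep hℓ).symm
  · -- `LinearMap.trace` is `0` on modules that are not free, so both sides vanish.
    rw [← S.trace_mulLeftOn α hℓu, LinearMap.trace_eq_zero_of_not_free hfree, LinearMap.zero_apply,
      LinearMap.zero_apply]

end BiangularAlgebra

theorem biangular_copairing_mul_eq_one_general {K : Type*} [CommRing K]
    {A : Type*} [Ring A] [Algebra K A] {G : Type*} [Group G] [DecidableEq G]
    (S : BiangularAlgebra K A G) (α : G)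
    (e : A → A → K)
    (he : ∀ (a b : A) (f : S.comp 1 →ₗ[K] S.comp 1),
      (∀ x : S.comp 1, (f x : A) = a * b * (x : A)) →
      e a b = LinearMap.trace K (S.comp 1) f)
    (n : ℕ) (p q : Fin n → A)
    (hp : ∀ i, p i ∈ S.comp α) (hq : ∀ i, q i ∈ S.comp α⁻¹)
    (hrepP : ∀ a ∈ S.comp α, a = ∑ i, e a (q i) • p i) :
    ∑ i, p i * q i = (1 : A) := by
  have hrep : ∀ a ∈ S.comp α, a = ∑ i, S.traceOne (a * q i) • p i := by
    intro a ha
    convert hrepP a ha using 3 with i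
    have haq := S.mul_mem_of_mul_eq ha (hq i) (mul_inv_cancel α)
    rw [S.traceOne_of_mem haq]
    exact (he a (q i) _ fun _ => rfl).symm
  refine S.eq_of_forall_traceOne_mul_eq (S.sum_mul_mem_one hp hq) S.one_mem fun ℓ hℓ => ?_
  rw [mul_one]
  exact S.traceOne_mul_copairing hp hq hrep hℓ

/-- Let `L` be a biangular `π`-algebra, `α ∈ π`, and
`b_α = Σᵢ pᵢ ⊗ qᵢ ∈ L_α ⊗ L_{α⁻¹}` the canonical copairing element for the
non-degenerate form `η(a,b) = Tr(μ_{ab}|_{L_1})` (encoded by the function `e`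
together with its defining trace property and the reproducing properties).
Then `Σᵢ pᵢ·qᵢ = 1_L`. -/
theorem biangular_copairing_mul_eq_one {K : Type*} [CommRing K]
    {A : Type*} [Ring A] [Algebra K A] {G : Type*} [Group G] [DecidableEq G]
    (S : BiangularAlgebra K A G) (α : G)
    (e : A → A → K)
    (he : ∀ (a b : A) (f : S.comp 1 →ₗ[K] S.comp 1),
      (∀ x : S.comp 1, (f x : A) = a * b * (x : A)) →
      e a b = LinearMap.trace K (S.comp 1) f)
    (n : ℕ) (p q : Fin n → A)
    (hp : ∀ i, p i ∈ S.comp α) (hq : ∀ i, q i ∈ S.comp α⁻¹)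
    (hrepP : ∀ a ∈ S.comp α, a = ∑ i, e a (q i) • p i)
    (hrepQ : ∀ b ∈ S.comp α⁻¹, b = ∑ i, e (p i) b • q i) :
    ∑ i, p i * q i = (1 : A) :=
  biangular_copairing_mul_eq_one_general S α e he n p q hp hq hrepP
end

section
/- Let π be a finite group and L a non-degenerate π-algebra over K with inner product η(a,b) = Tr(μ_{ab}: L → L). For each α ∈ π let b_α ∈ L_α ⊗ L_{α⁻¹} be the canonical copairing and b̂_α = Σᵢ pᵢ^α·qᵢ^α ∈ L_1. Then Σ_{α∈π} b̂_α = 1_L. -/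
/-! Write `T z = Tr(μ_z)`, `π_α` for the graded projections and `c = Σ_α b̂_α`. The reproducing
property of `p, q` makes `(p_i^α, T (π_α (-) * q_i^α))` a finite dual system of the algebra, whence
`Tr f = Σ_{α,i} T (π_α (f p_i^α) * q_i^α)`. With `f = μ_z` this shows that `T` vanishes in nontrivial
degree (left multiplication by `z` moves every `L_α` off itself) and that `T x = T (x c)` for `x`
of degree `1`. As `c` has degree `1`, `T (c y) = T (c π_1 y) = T (π_1 y c) = T (π_1 y) = T y`, i.e.
`η(c, -) = η(1, -)`. -/

namespace DirectSum.IsInternal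

variable {R M ι : Type*} [Semiring R] [AddCommMonoid M] [Module R M] [DecidableEq ι]
  {N : ι → Submodule R M}

noncomputable def proj (h : IsInternal N) (i : ι) : M →ₗ[R] M :=
  (N i).subtype ∘ₗ component R ι (fun j => N j) i ∘ₗ
    (LinearEquiv.ofBijective (coeLinearMap N) h).symm.toLinearMap

theorem proj_mem (h : IsInternal N) (i : ι) (x : M) : h.proj i x ∈ N i :=
  SetLike.coe_mem _

theorem proj_of_mem_ne (h : IsInternal N) {i j : ι} {x : M} (hx : x ∈ N i) (hij : i ≠ j) :
    h.proj j x = 0 := by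
  simp [proj, ← apply_eq_component, h.ofBijective_coeLinearMap_of_mem_ne hij hx]

theorem proj_of_mem_same (h : IsInternal N) {i : ι} {x : M} (hx : x ∈ N i) : h.proj i x = x := by
  simp [proj, ← apply_eq_component, h.ofBijective_coeLinearMap_of_mem hx]

theorem sum_proj [Fintype ι] (h : IsInternal N) (x : M) : ∑ i, h.proj i x = x := by
  set e := LinearEquiv.ofBijective (coeLinearMap N) h
  have hof : ∀ i, h.proj i x = coeLinearMap N (of (fun j => N j) i (e.symm x i)) := fun i => by
    simp [proj, ← apply_eq_component, coeLinearMap_of, e]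
  simp_rw [hof, ← map_sum, sum_univ_of]
  exact e.apply_symm_apply x

end DirectSum.IsInternal

theorem LinearMap.trace_eq_sum_of_sum_smul_eq {R M ι : Type*} [CommRing R] [AddCommGroup M]
    [Module R M] [Module.Free R M] [Module.Finite R M] [Fintype ι] (e : ι → M)
    (φ : ι → Module.Dual R M) (he : ∀ x, ∑ j, φ j x • e j = x) (f : M →ₗ[R] M) :
    trace R M f = ∑ j, φ j (f (e j)) := by
  have hf : f = ∑ j, (φ j ∘ₗ f).smulRight (e j) := by
    ext x
    simp [he]
  conv_lhs => rw [hf]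
  simp

noncomputable def mulTrace (K A : Type*) [CommRing K] [Ring A] [Algebra K A] : A →ₗ[K] K :=
  LinearMap.trace K A ∘ₗ LinearMap.mul K A

section MulTrace

variable {K A : Type*} [CommRing K] [Ring A] [Algebra K A]

theorem mulTrace_apply (z : A) :
    mulTrace K A z = LinearMap.trace K A (LinearMap.mulLeft K z) := rfl

theorem mulTrace_mul_comm [Module.Free K A] [Module.Finite K A] (a b : A) :
    mulTrace K A (a * b) = mulTrace K A (b * a) := by
  simp only [mulTrace_apply, LinearMap.mulLeft_mul]
  exact LinearMap.trace_mul_comm K _ _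

theorem mulTrace_eq_zero_of_not_exists_basis (h : ¬∃ s : Finset A, Nonempty (Module.Basis s K A))
    (z : A) : mulTrace K A z = 0 := by
  rw [mulTrace_apply, LinearMap.trace, dif_neg h, LinearMap.zero_apply]

end MulTrace

namespace GradedPiAlgebra

variable {K A G : Type*} [CommRing K] [Ring A] [Algebra K A] [Group G] [DecidableEq G]
  [Fintype G] (S : GradedPiAlgebra K A G) {n : G → ℕ} {p q : ∀ α : G, Fin (n α) → A}

theorem copairing_mem_one (hp : ∀ α i, p α i ∈ S.comp α) (hq : ∀ α i, q α i ∈ S.comp α⁻¹) :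
    ∑ α, ∑ i, p α i * q α i ∈ S.comp 1 :=
  Submodule.sum_mem _ fun α _ => Submodule.sum_mem _ fun i _ => by
    simpa using S.mul_mem (hp α i) (hq α i)

section Free

variable [Module.Free K A] [Module.Finite K A]

theorem mulTrace_eq_sum
    (hrepP : ∀ α, ∀ a ∈ S.comp α, a = ∑ i, mulTrace K A (a * q α i) • p α i) (z : A) :
    mulTrace K A z = ∑ α, ∑ i, mulTrace K A (S.internal.proj α (z * p α i) * q α i) := by
  let φ : (Σ α, Fin (n α)) → Module.Dual K A := fun j =>
    mulTrace K A ∘ₗ LinearMap.mulRight K (q j.1 j.2) ∘ₗ S.internal.proj j.1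
  have hφ : ∀ x, ∑ j, φ j x • p j.1 j.2 = x := fun x => by
    rw [Fintype.sum_sigma]
    conv_rhs => rw [← S.internal.sum_proj x]
    exact Finset.sum_congr rfl fun α _ => (hrepP α _ (S.internal.proj_mem α x)).symm
  rw [mulTrace_apply, LinearMap.trace_eq_sum_of_sum_smul_eq _ φ hφ, Fintype.sum_sigma]
  rfl

theorem mulTrace_eq_zero_of_mem (hp : ∀ α i, p α i ∈ S.comp α)
    (hrepP : ∀ α, ∀ a ∈ S.comp α, a = ∑ i, mulTrace K A (a * q α i) • p α i)
    {γ : G} (hγ : γ ≠ 1) {z : A} (hz : z ∈ S.comp γ) : mulTrace K A z = 0 := by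
  rw [S.mulTrace_eq_sum hrepP]
  refine Finset.sum_eq_zero fun α _ => Finset.sum_eq_zero fun i _ => ?_
  have hne : γ * α ≠ α := fun h => hγ (by simpa using h)
  rw [S.internal.proj_of_mem_ne (S.mul_mem hz (hp α i)) hne, zero_mul, map_zero]

theorem mulTrace_sum_eq_of_mem (hp : ∀ α i, p α i ∈ S.comp α)
    (hrepP : ∀ α, ∀ a ∈ S.comp α, a = ∑ i, mulTrace K A (a * q α i) • p α i)
    (z : G → A) (hz : ∀ β, z β ∈ S.comp β) : mulTrace K A (∑ β, z β) = mulTrace K A (z 1) := by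
  rw [map_sum, Finset.sum_eq_single 1]
  · exact fun β _ hβ => S.mulTrace_eq_zero_of_mem hp hrepP hβ (hz β)
  · exact fun h => absurd (Finset.mem_univ 1) h

theorem mulTrace_mul_copairing_of_mem_one (hp : ∀ α i, p α i ∈ S.comp α)
    (hrepP : ∀ α, ∀ a ∈ S.comp α, a = ∑ i, mulTrace K A (a * q α i) • p α i)
    {x : A} (hx : x ∈ S.comp 1) : mulTrace K A (x * ∑ α, ∑ i, p α i * q α i) = mulTrace K A x := by
  rw [S.mulTrace_eq_sum hrepP x]
  simp only [Finset.mul_sum, map_sum, ← mul_assoc]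
  refine Finset.sum_congr rfl fun α _ => Finset.sum_congr rfl fun i _ => ?_
  rw [S.internal.proj_of_mem_same (by simpa using S.mul_mem hx (hp α i))]

end Free

theorem mulTrace_copairing_mul (hp : ∀ α i, p α i ∈ S.comp α) (hq : ∀ α i, q α i ∈ S.comp α⁻¹)
    (hrepP : ∀ α, ∀ a ∈ S.comp α, a = ∑ i, mulTrace K A (a * q α i) • p α i) (y : A) :
    mulTrace K A ((∑ α, ∑ i, p α i * q α i) * y) = mulTrace K A y := by
  by_cases hbasis : ∃ s : Finset A, Nonempty (Module.Basis s K A)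
  · obtain ⟨s, ⟨b⟩⟩ := hbasis
    have := Module.Free.of_basis b
    have := Module.Finite.of_basis b
    set c := ∑ α, ∑ i, p α i * q α i
    have hc : c ∈ S.comp 1 := S.copairing_mem_one hp hq
    let P := S.internal.proj
    calc mulTrace K A (c * y)
        = mulTrace K A (∑ β, c * P β y) := by rw [← Finset.mul_sum, S.internal.sum_proj]
      _ = mulTrace K A (c * P 1 y) :=
          S.mulTrace_sum_eq_of_mem hp hrepP _ fun β => by
            simpa using S.mul_mem hc (S.internal.proj_mem β y)
      _ = mulTrace K A (P 1 y * c) := mulTrace_mul_comm _ _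
      _ = mulTrace K A (P 1 y) :=
          S.mulTrace_mul_copairing_of_mem_one hp hrepP (S.internal.proj_mem 1 y)
      _ = mulTrace K A (∑ β, P β y) :=
          (S.mulTrace_sum_eq_of_mem hp hrepP _ (S.internal.proj_mem · y)).symm
      _ = mulTrace K A y := by rw [S.internal.sum_proj]
  · -- Mathlib's trace is `0` on modules without a finite basis.
    simp only [mulTrace_eq_zero_of_not_exists_basis hbasis]

end GradedPiAlgebra

theorem nondegenerate_copairing_sum_eq_one_general {K : Type*} [CommRing K]
    {A : Type*} [Ring A] [Algebra K A] {G : Type*} [Group G] [DecidableEq G] [Fintype G]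
    (S : GradedPiAlgebra K A G)
    -- the inner product `η(a,b) = Tr(μ_{ab} : L → L)` is non-degenerate:
    (hnd : ∃ B : A →ₗ[K] A →ₗ[K] K,
      (∀ x y : A, B x y = LinearMap.trace K A (LinearMap.mulLeft K (x * y))) ∧
      Function.Bijective B ∧ Function.Bijective B.flip)
    (n : G → ℕ) (p q : ∀ α : G, Fin (n α) → A)
    (hp : ∀ (α : G) (i : Fin (n α)), p α i ∈ S.comp α)
    (hq : ∀ (α : G) (i : Fin (n α)), q α i ∈ S.comp α⁻¹)
    (hrepP : ∀ (α : G), ∀ a ∈ S.comp α,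
      a = ∑ i, LinearMap.trace K A (LinearMap.mulLeft K (a * q α i)) • p α i) :
    ∑ α : G, ∑ i, p α i * q α i = (1 : A) := by
  obtain ⟨B, hB, hBbij, -⟩ := hnd
  refine hBbij.injective (LinearMap.ext fun y => ?_)
  rw [hB, hB, one_mul]
  exact S.mulTrace_copairing_mul hp hq hrepP y

/-- Let `π` be a finite group and `L` a non-degenerate `π`-algebra
over `K`, with inner product `η(a,b) = Tr(μ_{ab} : L → L)`. For each `α ∈ π`, let
`b_α ∈ L_α ⊗ L_{α⁻¹}` be the canonical copairing (given by families `p α`, `q α`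
with the reproducing properties) and `b̂_α = Σᵢ pᵢ^α·qᵢ^α ∈ L_1`.
Then `Σ_{α∈π} b̂_α = 1_L`. -/
theorem nondegenerate_copairing_sum_eq_one {K : Type*} [CommRing K]
    {A : Type*} [Ring A] [Algebra K A] {G : Type*} [Group G] [DecidableEq G] [Fintype G]
    (S : GradedPiAlgebra K A G)
    -- the inner product `η(a,b) = Tr(μ_{ab} : L → L)` is non-degenerate:
    (hnd : ∃ B : A →ₗ[K] A →ₗ[K] K,
      (∀ x y : A, B x y = LinearMap.trace K A (LinearMap.mulLeft K (x * y))) ∧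
      Function.Bijective B ∧ Function.Bijective B.flip)
    (n : G → ℕ) (p q : ∀ α : G, Fin (n α) → A)
    (hp : ∀ (α : G) (i : Fin (n α)), p α i ∈ S.comp α)
    (hq : ∀ (α : G) (i : Fin (n α)), q α i ∈ S.comp α⁻¹)
    (hrepP : ∀ (α : G), ∀ a ∈ S.comp α,
      a = ∑ i, LinearMap.trace K A (LinearMap.mulLeft K (a * q α i)) • p α i)
    (hrepQ : ∀ (α : G), ∀ b ∈ S.comp α⁻¹,
      b = ∑ i, LinearMap.trace K A (LinearMap.mulLeft K (p α i * b)) • q α i) :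
    ∑ α : G, ∑ i, p α i * q α i = (1 : A) :=
  nondegenerate_copairing_sum_eq_one_general S hnd n p q hp hq hrepP
end

section
/- Let L be a semisimple crossed π-algebra over a field K of characteristic 0. For any basic idempotent i ∈ L_1 and α ∈ π: dim(i·L_α) = 1 if φ_α(i) = i, and dim(i·L_α) = 0 otherwise. -/
/-!
Apply axiom (3.2.4) with `β = 1` and `c = i`. On `L_α` the map `x ↦ i x` is a projection, so its
trace is `dim (i L_α)`; on `L_1` the map `y ↦ φ_{α⁻¹} (i y)` has rank one, and its trace is the
`i`-coordinate of `φ_{α⁻¹} i`. This coordinate is `1` when `φ_α` fixes `i`. Otherwise it vanishes: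
if it were nonzero, applying `φ_α` to `φ_{α⁻¹}(i) · i` would put `φ_α i` in `K i`, and the only
nonzero idempotent there is `i`.
-/

/-- A crossed `G`-algebra over `K`, realized as a `G`-grading by submodules of an
ambient associative unital `K`-algebra `A`, together with a symmetric Frobenius
form `η` and an action `φ` of `G` by algebra automorphisms satisfying the axioms
(3.1.1)–(3.2.4) of Turaev. -/
structure CrossedAlgebra (K : Type*) [CommRing K] (A : Type*) [Ring A] [Algebra K A]
    (G : Type*) [Group G] [DecidableEq G] where
  comp : G → Submodule K A
  one_mem : (1 : A) ∈ comp 1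
  mul_mem : ∀ {α β : G} {a b : A}, a ∈ comp α → b ∈ comp β → a * b ∈ comp (α * β)
  internal : DirectSum.IsInternal comp
  projective : ∀ α : G, Module.Projective K (comp α)
  finite : ∀ α : G, Module.Finite K (comp α)
  η : A →ₗ[K] A →ₗ[K] K
  η_symm : ∀ a b : A, η a b = η b a
  η_graded : ∀ {α β : G} {a b : A}, a ∈ comp α → b ∈ comp β → α * β ≠ 1 → η a b = 0
  η_nondeg : ∀ α : G,
    Function.Bijective fun a : comp α => (η (a : A)).domRestrict (comp α⁻¹)
  η_assoc : ∀ a b c : A, η (a * b) c = η a (b * c)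
  φ : G →* (A ≃ₐ[K] A)
  φ_η : ∀ (β : G) (a b : A), η (φ β a) (φ β b) = η a b
  φ_comp : ∀ (β : G) {α : G} {a : A}, a ∈ comp α → φ β a ∈ comp (β * α * β⁻¹)
  φ_self : ∀ {β : G} {a : A}, a ∈ comp β → φ β a = a
  φ_cross : ∀ {α β : G} {a b : A}, a ∈ comp α → b ∈ comp β → (φ β a) * b = b * a
  φ_trace : ∀ {α β : G} {c : A}, c ∈ comp (α * β * α⁻¹ * β⁻¹) →
    ∀ (f : comp α →ₗ[K] comp α) (g : comp β →ₗ[K] comp β),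
      (∀ x : comp α, (f x : A) = c * φ β (x : A)) →
      (∀ x : comp β, (g x : A) = φ α⁻¹ (c * (x : A))) →
      LinearMap.trace K (comp α) f = LinearMap.trace K (comp β) g

open Module

namespace Module.Basis

variable {K A ι : Type*} [CommRing K] [Ring A] [Algebra K A] {V : Submodule K A}

theorem apply_mul_eq_coord_smul (b : Basis ι K V) (hb : OrthogonalIdempotents fun j ↦ (b j : A))
    (j : ι) (y : V) : (b j : A) * y = b.coord j y • (b j : A) := by
  have : (LinearMap.mulLeft K (b j : A)).comp V.subtype = (b.coord j).smulRight (b j : A) := by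
    refine b.ext fun k ↦ ?_
    obtain rfl | hjk := eq_or_ne j k
    · simp [(hb.idem j).eq]
    · simp [hb.ortho hjk, Finsupp.single_eq_of_ne hjk]
  exact LinearMap.congr_fun this y

theorem mul_apply_eq_coord_smul (b : Basis ι K V) (hb : OrthogonalIdempotents fun j ↦ (b j : A))
    (j : ι) (y : V) : (y : A) * b j = b.coord j y • (b j : A) := by
  have : (LinearMap.mulRight K (b j : A)).comp V.subtype = (b.coord j).smulRight (b j : A) := by
    refine b.ext fun k ↦ ?_
    obtain rfl | hjk := eq_or_ne j k
    · simp [(hb.idem j).eq]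
    · simp [hb.ortho hjk.symm, Finsupp.single_eq_of_ne hjk]
  exact LinearMap.congr_fun this y

end Module.Basis

section Field

variable {K A : Type*} [Field K] [Ring A] [Algebra K A]

theorem IsIdempotentElem.smul_eq_self {i : A} {l : K} (hi : IsIdempotentElem i)
    (hli : IsIdempotentElem (l • i)) (hli0 : l • i ≠ 0) : l • i = i := by
  have hi0 : i ≠ 0 := by rintro rfl; simp at hli0
  have hl : IsIdempotentElem l := by
    refine smul_left_injective K hi0 ?_
    have := hli.eq
    rwa [smul_mul_smul_comm, hi.eq] at this
  rcases IsIdempotentElem.iff_eq_zero_or_one.1 hl with rfl | rfl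
  · simp at hli0
  · exact one_smul K i

theorem Module.Basis.algEquiv_apply_eq_self_of_coord_ne_zero {ι : Type*} {V : Submodule K A}
    (b : Basis ι K V) (hb : OrthogonalIdempotents fun j ↦ (b j : A)) (σ : A ≃ₐ[K] A) (j : ι)
    (hσ : σ (b j) ∈ V) (e : V) (he : σ e = b j) (hc : b.coord j e ≠ 0) : σ (b j) = b j := by
  have h₁ : (b j : A) * σ (b j) = b.coord j e • σ (b j) := by
    rw [← map_smul, ← b.mul_apply_eq_coord_smul hb, map_mul, he]
  have h₂ : (b j : A) * σ (b j) = b.coord j ⟨_, hσ⟩ • (b j : A) :=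
    b.apply_mul_eq_coord_smul hb j ⟨_, hσ⟩
  have hσj : σ (b j) = ((b.coord j e)⁻¹ * b.coord j ⟨_, hσ⟩) • (b j : A) := by
    rw [mul_smul, ← h₂, h₁, smul_smul, inv_mul_cancel₀ hc, one_smul]
  rw [hσj]
  refine (hb.idem j).smul_eq_self ?_ ?_ <;> rw [← hσj]
  · exact (hb.idem j).map σ
  · simpa using b.ne_zero j

theorem LinearMap.trace_restrict_mulLeft_eq_finrank {e : A} (he : IsIdempotentElem e)
    {W : Submodule K A} [FiniteDimensional K W] (hW : ∀ x ∈ W, LinearMap.mulLeft K e x ∈ W) :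
    trace K W ((LinearMap.mulLeft K e).restrict hW) = finrank K (W.map (LinearMap.mulLeft K e)) := by
  have hproj : IsIdempotentElem ((LinearMap.mulLeft K e).restrict hW) :=
    LinearMap.ext fun x ↦ Subtype.ext (by simp [← mul_assoc, he.eq])
  have := Module.Free.of_divisionRing K (range ((LinearMap.mulLeft K e).restrict hW))
  have := Module.Free.of_divisionRing K (ker ((LinearMap.mulLeft K e).restrict hW))
  rw [((LinearMap.isProj_range_iff_isIdempotentElem _).2 hproj).trace, LinearMap.range_restrict,
    (Submodule.comapSubtypeEquivOfLe (Submodule.map_le_iff_le_comap.2 hW)).finrank_eq]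

end Field

namespace CrossedAlgebra

variable {K A G : Type*} [Field K] [Ring A] [Algebra K A] [Group G] [DecidableEq G]
  (S : CrossedAlgebra K A G)

theorem φ_mem_comp_one (β : G) {a : A} (ha : a ∈ S.comp 1) : S.φ β a ∈ S.comp 1 := by
  simpa using S.φ_comp β ha

theorem finrank_map_mulLeft_eq_coord {ι : Type*} (b : Basis ι K (S.comp 1))
    (hb : OrthogonalIdempotents fun j ↦ (b j : A)) (j : ι) (α : G) :
    (finrank K ((S.comp α).map (LinearMap.mulLeft K (b j : A))) : K) =
      b.coord j ⟨S.φ α⁻¹ (b j), S.φ_mem_comp_one α⁻¹ (b j).2⟩ := by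
  have := S.finite α
  have := S.finite 1
  have hW : ∀ x ∈ S.comp α, LinearMap.mulLeft K (b j : A) x ∈ S.comp α := fun x hx ↦ by
    simpa using S.mul_mem (b j).2 hx
  rw [← LinearMap.trace_restrict_mulLeft_eq_finrank (hb.idem j) hW, ← LinearMap.trace_smulRight]
  refine S.φ_trace (α := α) (β := 1) (c := b j) (by simp) _ _ (fun x ↦ ?_) (fun y ↦ ?_)
  · simp
  · rw [LinearMap.smulRight_apply, Submodule.coe_smul, b.apply_mul_eq_coord_smul hb, map_smul]

end CrossedAlgebra

/-- Let `L` be a semisimple crossed `π`-algebra over a field `K` of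
characteristic 0, i.e. `L_1` has a basis of mutually annihilating idempotents.
For any basic idempotent `i = b j₀` and any `α ∈ π`:
`dim(i·L_α) = 1` if `φ_α(i) = i`, and `dim(i·L_α) = 0` otherwise. -/
theorem semisimple_crossedAlgebra_dim_idempotent_comp {K : Type*} [Field K] [CharZero K]
    {A : Type*} [Ring A] [Algebra K A] {G : Type*} [Group G] [DecidableEq G]
    (S : CrossedAlgebra K A G)
    {ι : Type*} (b : Module.Basis ι K (S.comp 1))
    (hidem : ∀ j, ((b j : A)) * ((b j : A)) = (b j : A))
    (hann : ∀ j k, j ≠ k → ((b j : A)) * ((b k : A)) = 0)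
    (j₀ : ι) (α : G) :
    (S.φ α (b j₀ : A) = (b j₀ : A) →
      Module.finrank K
        (Submodule.map (LinearMap.mulLeft K ((b j₀ : A))) (S.comp α)) = 1) ∧
    (S.φ α (b j₀ : A) ≠ (b j₀ : A) →
      Module.finrank K
        (Submodule.map (LinearMap.mulLeft K ((b j₀ : A))) (S.comp α)) = 0) := by
  have hb : OrthogonalIdempotents fun j ↦ (b j : A) := ⟨hidem, hann⟩
  have key := S.finrank_map_mulLeft_eq_coord b hb j₀ α
  have hinv : S.φ α⁻¹ = (S.φ α).symm := by rw [map_inv, AlgEquiv.aut_inv]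
  refine ⟨fun hfix ↦ ?_, fun hmoved ↦ ?_⟩
  · have hfix' : S.φ α⁻¹ (b j₀) = b j₀ := by
      rw [hinv]
      exact (S.φ α).symm_apply_eq.2 hfix.symm
    have hc : b.coord j₀ ⟨_, S.φ_mem_comp_one α⁻¹ (b j₀).2⟩ = 1 := by
      rw [show (⟨_, _⟩ : S.comp 1) = b j₀ from Subtype.ext hfix', b.coord_apply, b.repr_self,
        Finsupp.single_eq_same]
    exact_mod_cast key.trans hc
  · have hc : b.coord j₀ ⟨S.φ α⁻¹ (b j₀), S.φ_mem_comp_one α⁻¹ (b j₀).2⟩ = 0 := by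
      by_contra hc
      refine hmoved (b.algEquiv_apply_eq_self_of_coord_ne_zero hb (S.φ α) j₀
        (S.φ_mem_comp_one α (b j₀).2) _ ?_ hc)
      simp [hinv]
    exact_mod_cast key.trans hc
end

section
/- Let G be a subgroup of finite index in a group π and L a crossed G-algebra over K. Fix coset representatives ω_i for i ∈ G\π. Define the transfer L̃ by L̃_α = ⊕_{i: ω_i α ω_i⁻¹ ∈ G} L_{ω_i α ω_i⁻¹} with multiplication induced componentwise from L (products of elements in different coset components are zero). Then L̃ is an associative unital π-graded algebra with unit the sum of the [π:G] copies of 1_L in L̃_1. -/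
open Classical in
/-- The `α`-component of the transfer `L̃` of a crossed `G`-algebra `L` along a
finite-index subgroup `G ≤ π`: as a module, `L̃ = Π_{i ∈ G\π} A`, and
`L̃_α` consists of the families whose `i`-th entry lies in `L_{ω_i α ω_i⁻¹}` when
`ω_i α ω_i⁻¹ ∈ G`, and vanishes otherwise. -/
noncomputable def transferComp {K : Type*} [CommRing K]
    {A : Type*} [Ring A] [Algebra K A]
    {P : Type*} [Group P] (H : Subgroup P) [DecidableEq P]
    (S : CrossedAlgebra K A H)
    (ω : Quotient (QuotientGroup.rightRel H) → P) (α : P) :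
    Submodule K (Quotient (QuotientGroup.rightRel H) → A) :=
  ⨅ i : Quotient (QuotientGroup.rightRel H),
    Submodule.comap (LinearMap.proj (R := K) (φ := fun _ => A) i)
      (if h : ω i * α * (ω i)⁻¹ ∈ H then S.comp ⟨ω i * α * (ω i)⁻¹, h⟩
       else (⊥ : Submodule K A))

/-! In the coset component `i`, the `α`-part of `L̃` is `L_{ω_i α ω_i⁻¹}` when `α` lies in the
image of the embedding `g ↦ ω_i⁻¹ g ω_i` of `G` into `π`, and `0` otherwise; that is, it is the
grading of `L` pushed forward along an injective homomorphism, which is again a multiplicative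
internal grading, now by `π`. The transfer is the pointwise product of these `[π:G]` gradings
of `A`, and a finite product of internal gradings, with componentwise multiplication, is an
internal grading respecting products. -/

open Function

theorem iSupIndep_extend_bot {α ι β : Type*} [CompleteLattice α] {e : ι → β} (he : Injective e)
    {t : ι → α} (ht : iSupIndep t) : iSupIndep (extend e t ⊥) := by
  intro j
  by_cases hj : ∃ i, e i = j
  · obtain ⟨i, rfl⟩ := hj
    rw [he.extend_apply]
    refine (ht i).mono_right (iSup₂_le fun k hk => ?_)
    by_cases hk' : ∃ i', e i' = k
    · obtain ⟨i', rfl⟩ := hk'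
      rw [he.extend_apply]
      exact le_iSup₂ (f := fun i' (_ : i' ≠ i) => t i') i' fun h => hk (h ▸ rfl)
    · rw [extend_apply' _ _ _ hk']
      exact bot_le
  · rw [extend_apply' _ _ _ hj]
    exact disjoint_bot_left

section ExtendGrading

variable {R A G P : Type*}

theorem one_mem_extend_bot [Semiring R] [Semiring A] [Module R A] [Monoid G] [Monoid P]
    {e : G →* P} (he : Injective e) {M : G → Submodule R A} (h1 : (1 : A) ∈ M 1) :
    (1 : A) ∈ extend e M ⊥ 1 := by
  rwa [← e.map_one, he.extend_apply]

theorem mul_mem_extend_bot [Semiring R] [Semiring A] [Module R A] [Monoid G] [Monoid P]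
    {e : G →* P} (he : Injective e) {M : G → Submodule R A}
    (hmul : ∀ {g h : G} {a b : A}, a ∈ M g → b ∈ M h → a * b ∈ M (g * h))
    {α β : P} {a b : A} (ha : a ∈ extend e M ⊥ α) (hb : b ∈ extend e M ⊥ β) :
    a * b ∈ extend e M ⊥ (α * β) := by
  by_cases hα : ∃ g, e g = α
  · by_cases hβ : ∃ h, e h = β
    · obtain ⟨g, rfl⟩ := hα
      obtain ⟨h, rfl⟩ := hβ
      rw [he.extend_apply] at ha hb
      rw [← e.map_mul, he.extend_apply]
      exact hmul ha hb
    · rw [extend_apply' _ _ _ hβ, Pi.bot_apply, Submodule.mem_bot] at hb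
      simp [hb]
  · rw [extend_apply' _ _ _ hα, Pi.bot_apply, Submodule.mem_bot] at ha
    simp [ha]

theorem isInternal_extend_bot [Ring R] [AddCommGroup A] [Module R A]
    [DecidableEq G] [DecidableEq P] {e : G → P} (he : Injective e) {M : G → Submodule R A}
    (hM : DirectSum.IsInternal M) : DirectSum.IsInternal (extend e M ⊥) := by
  rw [DirectSum.isInternal_submodule_iff_iSupIndep_and_iSup_eq_top] at hM ⊢
  exact ⟨iSupIndep_extend_bot he hM.1, (iSup_extend_bot he M).trans hM.2⟩

end ExtendGrading

section PiGrading

open Submodule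

variable {R A ι P : Type*}

theorem mul_mem_pi_univ [Semiring R] [Semiring A] [Module R A] [Mul P]
    {N : ι → P → Submodule R A}
    (hmul : ∀ i {α β : P} {a b : A}, a ∈ N i α → b ∈ N i β → a * b ∈ N i (α * β))
    {α β : P} {f g : ι → A} (hf : f ∈ pi Set.univ fun i => N i α)
    (hg : g ∈ pi Set.univ fun i => N i β) : f * g ∈ pi Set.univ fun i => N i (α * β) :=
  fun i _ => hmul i (hf i trivial) (hg i trivial)

theorem isInternal_pi_univ [Ring R] [AddCommGroup A] [Module R A] [Finite ι] [DecidableEq P]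
    {N : ι → P → Submodule R A} (hN : ∀ i, DirectSum.IsInternal (N i)) :
    DirectSum.IsInternal fun α => pi Set.univ fun i => N i α := by
  classical
  simp only [DirectSum.isInternal_submodule_iff_iSupIndep_and_iSup_eq_top] at hN ⊢
  constructor
  · intro α
    rw [disjoint_def]
    intro f hf hf'
    funext i
    have hproj : (⨆ β, ⨆ _ : β ≠ α, pi Set.univ fun i => N i β) ≤
        comap (LinearMap.proj i) (⨆ β, ⨆ _ : β ≠ α, N i β) :=
      iSup₂_le fun β hβ _ hg => le_iSup₂ (f := fun β (_ : β ≠ α) => N i β) β hβ (hg i trivial)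
    exact disjoint_def.mp ((hN i).1 α) _ (hf i trivial) (hproj hf')
  · refine eq_top_iff.mpr
      ((LinearMap.iSup_range_single (R := R) (φ := fun _ : ι => A)).symm.le.trans
        (iSup_le fun i => ?_))
    rw [LinearMap.range_eq_map, ← (hN i).2, Submodule.map_iSup]
    refine iSup_mono fun α => ?_
    rintro _ ⟨a, ha, rfl⟩ j -
    by_cases hj : j = i
    · subst hj
      simpa using ha
    · simp [Pi.single_eq_of_ne hj]

end PiGrading

def conjInvSubtype {P : Type*} [Group P] (H : Subgroup P) (p : P) : H →* P :=
  (MulAut.conj p⁻¹).toMonoidHom.comp H.subtype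

theorem conjInvSubtype_injective {P : Type*} [Group P] (H : Subgroup P) (p : P) :
    Injective (conjInvSubtype H p) :=
  (MulAut.conj p⁻¹).injective.comp Subtype.val_injective

open Classical in
theorem dite_conj_mem_eq_extend {P α : Type*} [Group P] [CompleteLattice α] (H : Subgroup P)
    (M : H → α) (p β : P) :
    (if h : p * β * p⁻¹ ∈ H then M ⟨p * β * p⁻¹, h⟩ else ⊥) =
      extend (conjInvSubtype H p) M ⊥ β := by
  split_ifs with h
  · have : conjInvSubtype H p ⟨p * β * p⁻¹, h⟩ = β := by simp [conjInvSubtype, mul_assoc]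
    conv_rhs => rw [← this]
    exact ((conjInvSubtype_injective H p).extend_apply _ _ _).symm
  · refine (extend_apply' (f := conjInvSubtype H p) M ⊥ β ?_).symm
    rintro ⟨g, rfl⟩
    exact h (by simp [conjInvSubtype, mul_assoc])

theorem transferComp_eq_pi {K : Type*} [CommRing K] {A : Type*} [Ring A] [Algebra K A]
    {P : Type*} [Group P] (H : Subgroup P) [DecidableEq P] (S : CrossedAlgebra K A H)
    (ω : Quotient (QuotientGroup.rightRel H) → P) :
    transferComp H S ω =
      fun α => Submodule.pi Set.univ fun i => extend (conjInvSubtype H (ω i)) S.comp ⊥ α := by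
  ext1 α
  simp only [transferComp, Submodule.iInf_comap_proj, dite_conj_mem_eq_extend]

theorem transfer_is_graded_algebra_general {K : Type*} [CommRing K]
    {A : Type*} [Ring A] [Algebra K A]
    {P : Type*} [Group P] [DecidableEq P] (H : Subgroup P) [H.FiniteIndex]
    (S : CrossedAlgebra K A H)
    (ω : Quotient (QuotientGroup.rightRel H) → P) :
    (∀ α β : P, ∀ f ∈ transferComp H S ω α, ∀ g ∈ transferComp H S ω β,
        f * g ∈ transferComp H S ω (α * β)) ∧
    ((1 : Quotient (QuotientGroup.rightRel H) → A) ∈ transferComp H S ω 1) ∧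
    (∀ i, (1 : Quotient (QuotientGroup.rightRel H) → A) i = (1 : A)) ∧
    (∀ f g h : Quotient (QuotientGroup.rightRel H) → A, f * g * h = f * (g * h)) ∧
    (∀ f : Quotient (QuotientGroup.rightRel H) → A, 1 * f = f ∧ f * 1 = f) ∧
    DirectSum.IsInternal (transferComp H S ω) := by
  have : Finite (Quotient (QuotientGroup.rightRel H)) :=
    .of_equiv _ (QuotientGroup.quotientRightRelEquivQuotientLeftRel H).symm
  have hinj i := conjInvSubtype_injective H (ω i)
  rw [transferComp_eq_pi]
  exact ⟨fun α β f hf g hg =>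
      mul_mem_pi_univ (fun i _ _ _ _ => mul_mem_extend_bot (hinj i) S.mul_mem) hf hg,
    fun i _ => one_mem_extend_bot (hinj i) S.one_mem, fun _ => rfl, fun _ _ _ => mul_assoc _ _ _,
    fun f => ⟨one_mul f, mul_one f⟩,
    isInternal_pi_univ fun i => isInternal_extend_bot (hinj i) S.internal⟩

/-- Let `G` be a subgroup of finite index in `π` and `L` a crossed
`G`-algebra over `K`, with coset representatives `ω_i` for `i ∈ G\π`. The transfer
`L̃`, with `L̃_α = ⊕_{i : ω_i α ω_i⁻¹ ∈ G} L_{ω_i α ω_i⁻¹}` and componentwise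
multiplication (products of elements in different coset components vanish, which
for the model `L̃ ⊆ Π_{i} A` is the pointwise product), is an associative unital
`π`-graded algebra whose unit is the sum of the `[π:G]` copies of `1_L`
(the constant family `1`). -/
theorem transfer_is_graded_algebra {K : Type*} [CommRing K]
    {A : Type*} [Ring A] [Algebra K A]
    {P : Type*} [Group P] [DecidableEq P] (H : Subgroup P) [H.FiniteIndex]
    (S : CrossedAlgebra K A H)
    (ω : Quotient (QuotientGroup.rightRel H) → P)
    (hω : ∀ i : Quotient (QuotientGroup.rightRel H),
      Quotient.mk (QuotientGroup.rightRel H) (ω i) = i) :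
    (∀ α β : P, ∀ f ∈ transferComp H S ω α, ∀ g ∈ transferComp H S ω β,
        f * g ∈ transferComp H S ω (α * β)) ∧
    ((1 : Quotient (QuotientGroup.rightRel H) → A) ∈ transferComp H S ω 1) ∧
    (∀ i, (1 : Quotient (QuotientGroup.rightRel H) → A) i = (1 : A)) ∧
    (∀ f g h : Quotient (QuotientGroup.rightRel H) → A, f * g * h = f * (g * h)) ∧
    (∀ f : Quotient (QuotientGroup.rightRel H) → A, 1 * f = f ∧ f * 1 = f) ∧
    DirectSum.IsInternal (transferComp H S ω) :=
  transfer_is_graded_algebra_general H S ω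
end

section
/- Let K be a field of characteristic 0 and L a normalized simple crossed π-algebra with distinguished basic idempotent i₀ ∈ L_1 and stabilizer G = {α ∈ π : φ_α(i₀) = i₀}. Choose generators s_α of the 1-dimensional spaces i₀L_α for α ∈ G, with s_1 = i₀. Then the structure constants θ_{α,β} ∈ K defined by s_α·s_β = θ_{α,β}·s_{αβ} are all invertible, and {θ_{α,β}}_{α,β∈G} is a normalized 2-cocycle on G with values in K*. -/
open LinearMap (mulLeft trace)

section StructureConstants

variable {K A G : Type*} [Field K] [Ring A] [Algebra K A] [Group G]
  {H : Subgroup G} {s : G → A} {θ : G → G → K}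

theorem structConst_cocycle
    (hθ : ∀ α ∈ H, ∀ β ∈ H, s α * s β = θ α β • s (α * β)) (hs : ∀ α ∈ H, s α ≠ 0)
    {α β γ : G} (hα : α ∈ H) (hβ : β ∈ H) (hγ : γ ∈ H) :
    θ α β * θ (α * β) γ = θ α (β * γ) * θ β γ := by
  refine smul_left_injective K (hs _ (H.mul_mem (H.mul_mem hα hβ) hγ)) ?_
  calc (θ α β * θ (α * β) γ) • s (α * β * γ) = s α * s β * s γ := by
        rw [hθ α hα β hβ, smul_mul_assoc, hθ _ (H.mul_mem hα hβ) γ hγ, mul_smul]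
    _ = s α * (s β * s γ) := mul_assoc ..
    _ = (θ α (β * γ) * θ β γ) • s (α * β * γ) := by
        rw [hθ β hβ γ hγ, mul_smul_comm, hθ α hα _ (H.mul_mem hβ hγ), smul_smul, mul_comm,
          mul_assoc]

theorem structConst_mul_one (hθ : ∀ α ∈ H, ∀ β ∈ H, s α * s β = θ α β • s (α * β))
    {α : G} (hα : α ∈ H) (hs : s α ≠ 0) (hunit : s α * s 1 = s α) : θ α 1 = 1 := by
  refine smul_left_injective K hs ?_
  simpa [hunit] using (hθ α hα 1 H.one_mem).symm

end StructureConstants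

theorem IsIdempotentElem.mul_eq_self_of_mem_map_mulLeft {K A : Type*} [CommSemiring K]
    [Semiring A] [Algebra K A] {e y : A} (he : IsIdempotentElem e) {M : Submodule K A}
    (hy : y ∈ M.map (mulLeft K e)) : e * y = y := by
  obtain ⟨x, -, rfl⟩ := hy
  simp [← mul_assoc, he.eq]

namespace CrossedAlgebra

variable {K A G : Type*} [Field K] [Ring A] [Algebra K A] [Group G] [DecidableEq G]
  (S : CrossedAlgebra K A G)

def stabilizer (e : A) : Subgroup G := (MulAction.stabilizer (A ≃ₐ[K] A) e).comap S.φ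

theorem mem_stabilizer {e : A} {α : G} : α ∈ S.stabilizer e ↔ S.φ α e = e := Iff.rfl

theorem exists_η_ne_zero {α : G} {a : A} (ha : a ∈ S.comp α) (ha0 : a ≠ 0) :
    ∃ y ∈ S.comp α⁻¹, S.η a y ≠ 0 := by
  by_contra! h
  refine ha0 (congrArg Subtype.val ((S.η_nondeg α).injective (a₁ := ⟨a, ha⟩) (a₂ := 0) ?_))
  ext y
  simpa using h y y.2

theorem η_eq_of_mul_eq_smul {e a a' : A} {c : K} (he : S.η e e = 1) (hea : e * a = a)
    (hc : a * a' = c • e) : S.η a a' = c := by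
  rw [← hea, S.η_assoc, hc]
  simp [he]

theorem map_mulLeft_le {e : A} (he : e ∈ S.comp 1) (α : G) :
    (S.comp α).map (mulLeft K e) ≤ S.comp α := by
  rintro _ ⟨x, hx, rfl⟩
  simpa using S.mul_mem he hx

theorem mem_comp_of_map_mulLeft_eq_span {e a : A} (he : e ∈ S.comp 1) {α : G}
    (ha : (S.comp α).map (mulLeft K e) = K ∙ a) : a ∈ S.comp α :=
  S.map_mulLeft_le he α (ha ▸ Submodule.mem_span_singleton_self a)

theorem mul_eq_left_of_map_mulLeft_eq_span {e a : A} (he : e ∈ S.comp 1)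
    (he' : IsIdempotentElem e) {α : G} (hα : α ∈ S.stabilizer e)
    (ha : (S.comp α).map (mulLeft K e) = K ∙ a) : a * e = a := by
  have hcross := S.φ_cross he (S.mem_comp_of_map_mulLeft_eq_span he ha)
  rw [S.mem_stabilizer.1 hα] at hcross
  rw [← hcross, he'.mul_eq_self_of_mem_map_mulLeft (ha ▸ Submodule.mem_span_singleton_self a)]

theorem η_ne_zero_of_map_mulLeft_eq_span {e a a' : A} (he : e ∈ S.comp 1)
    (he' : IsIdempotentElem e) {β : G} (hβ : β ∈ S.stabilizer e)
    (ha : (S.comp β).map (mulLeft K e) = K ∙ a) (ha' : (S.comp β⁻¹).map (mulLeft K e) = K ∙ a')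
    (ha0 : a ≠ 0) : S.η a a' ≠ 0 := by
  obtain ⟨y, hy, hay⟩ := S.exists_η_ne_zero (S.mem_comp_of_map_mulLeft_eq_span he ha) ha0
  obtain ⟨c, hc⟩ := Submodule.mem_span_singleton.1 (ha' ▸ Submodule.mem_map_of_mem hy)
  have hηy : S.η a y = c * S.η a a' := calc
    S.η a y = S.η (a * e) y := by rw [S.mul_eq_left_of_map_mulLeft_eq_span he he' hβ ha]
    _ = S.η a (c • a') := by rw [S.η_assoc, hc]; rfl
    _ = c * S.η a a' := by simp
  exact fun h0 => hay (by rw [hηy, h0, mul_zero])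

section Trace

variable {e : A} (he : e ∈ S.comp 1)

def mulLeftComp (β : G) : S.comp β →ₗ[K] S.comp β :=
  (mulLeft K e).restrict fun _ hx => S.map_mulLeft_le he β ⟨_, hx, rfl⟩

def mulLeftφ (β : G) : S.comp 1 →ₗ[K] S.comp 1 :=
  ((mulLeft K e).comp (S.φ β).toLinearMap).restrict fun x hx =>
    S.map_mulLeft_le he 1 ⟨S.φ β x, by simpa using S.φ_comp β hx, rfl⟩

theorem trace_mulLeftComp (β : G) :
    trace K _ (S.mulLeftComp he β) = trace K _ (S.mulLeftφ he β) :=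
  (S.φ_trace (α := 1) (by simpa using he) _ _ (fun _ => rfl)
    fun _ => by simp [mulLeftComp]).symm

end Trace

section IdempotentBasis

variable {ι : Type*} (b : Module.Basis ι K (S.comp 1))

theorem η_basis_eq_ite [DecidableEq ι] (hidem : ∀ j, (b j : A) * b j = b j)
    (hann : ∀ j k, j ≠ k → (b j : A) * b k = 0) (hnormzd : ∀ j, S.η (b j) (b j) = 1) (j k : ι) :
    S.η (b j) (b k) = if j = k then 1 else 0 := by
  split_ifs with h
  · exact h ▸ hnormzd j
  · rw [← hidem k, ← S.η_assoc, hann j k h, map_zero, LinearMap.zero_apply]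

theorem basis_repr_eq_η [DecidableEq ι]
    (hortho : ∀ j k, S.η (b j) (b k) = if j = k then 1 else 0) (v : S.comp 1) (j : ι) :
    b.repr v j = S.η (b j) v := by
  have : b.coord j = (S.η (b j)).domRestrict (S.comp 1) :=
    b.ext fun k => by simp [hortho, Finsupp.single_apply, eq_comm]
  exact LinearMap.congr_fun this v

theorem trace_mulLeftφ_basis (hidem : ∀ j, (b j : A) * b j = b j)
    (hann : ∀ j k, j ≠ k → (b j : A) * b k = 0) (hnormzd : ∀ j, S.η (b j) (b j) = 1)
    (j₀ : ι) (β : G) :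
    trace K _ (S.mulLeftφ (b j₀).2 β) = S.η (b j₀) (S.φ β (b j₀)) := by
  classical
  have := S.finite 1
  have := FiniteDimensional.fintypeBasisIndex b
  have hdiag : ∀ j, LinearMap.toMatrix b b (S.mulLeftφ (b j₀).2 β) j j =
      if j = j₀ then S.η (b j₀) (S.φ β (b j₀)) else 0 := by
    intro j
    rw [LinearMap.toMatrix_apply, S.basis_repr_eq_η b (S.η_basis_eq_ite b hidem hann hnormzd)]
    change S.η (b j) (b j₀ * S.φ β (b j)) = _
    rw [← S.η_assoc]
    split_ifs with h
    · rw [h, hidem]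
    · rw [hann j j₀ h, map_zero, LinearMap.zero_apply]
  rw [LinearMap.trace_eq_matrix_trace K b, Matrix.trace]
  simp [Matrix.diag, hdiag]

theorem map_mulLeft_ne_bot (hidem : ∀ j, (b j : A) * b j = b j)
    (hann : ∀ j k, j ≠ k → (b j : A) * b k = 0) (hnormzd : ∀ j, S.η (b j) (b j) = 1)
    {j₀ : ι} {β : G} (hβ : β ∈ S.stabilizer (b j₀ : A)) :
    (S.comp β).map (mulLeft K (b j₀ : A)) ≠ ⊥ := by
  intro h
  have hzero : S.mulLeftComp (b j₀).2 β = 0 :=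
    LinearMap.ext fun x => Subtype.ext ((Submodule.eq_bot_iff _).1 h _ ⟨x, x.2, rfl⟩)
  have htrace := S.trace_mulLeftComp (b j₀).2 β
  rw [hzero, map_zero, S.trace_mulLeftφ_basis b hidem hann hnormzd, S.mem_stabilizer.1 hβ,
    hnormzd] at htrace
  exact zero_ne_one htrace

end IdempotentBasis

end CrossedAlgebra

theorem simple_crossedAlgebra_structure_constants_cocycle_general
    {K : Type*} [Field K]
    {A : Type*} [Ring A] [Algebra K A] {G : Type*} [Group G] [DecidableEq G]
    (S : CrossedAlgebra K A G)
    {ι : Type*} (b : Module.Basis ι K (S.comp 1))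
    (hidem : ∀ j, ((b j : A)) * ((b j : A)) = (b j : A))
    (hann : ∀ j k, j ≠ k → ((b j : A)) * ((b k : A)) = 0)
    (hnormzd : ∀ j, S.η (b j : A) (b j : A) = 1)
    (j₀ : ι)
    (s : G → A)
    (hs1 : s 1 = (b j₀ : A))
    (hsgen : ∀ α : G, S.φ α (b j₀ : A) = (b j₀ : A) →
      Submodule.map (LinearMap.mulLeft K ((b j₀ : A))) (S.comp α) =
        Submodule.span K {s α})
    (θ : G → G → K)
    (hθ : ∀ α β : G, S.φ α (b j₀ : A) = (b j₀ : A) →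
      S.φ β (b j₀ : A) = (b j₀ : A) →
      s α * s β = θ α β • s (α * β)) :
    (∀ α β : G, S.φ α (b j₀ : A) = (b j₀ : A) →
      S.φ β (b j₀ : A) = (b j₀ : A) → IsUnit (θ α β)) ∧
    (∀ α β γ : G, S.φ α (b j₀ : A) = (b j₀ : A) →
      S.φ β (b j₀ : A) = (b j₀ : A) → S.φ γ (b j₀ : A) = (b j₀ : A) →
      θ α β * θ (α * β) γ = θ α (β * γ) * θ β γ) ∧
    θ 1 1 = 1 := by
  have hi₀ : IsIdempotentElem (b j₀ : A) := hidem j₀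
  have hmul : ∀ α ∈ S.stabilizer (b j₀ : A), ∀ β ∈ S.stabilizer (b j₀ : A),
      s α * s β = θ α β • s (α * β) := fun α hα β hβ => hθ α β hα hβ
  have hs : ∀ α ∈ S.stabilizer (b j₀ : A), s α ≠ 0 := fun α hα h0 =>
    S.map_mulLeft_ne_bot b hidem hann hnormzd hα
      (by rw [hsgen α hα, h0, Submodule.span_zero_singleton])
  have hright : ∀ α ∈ S.stabilizer (b j₀ : A), θ α 1 = 1 := fun α hα =>
    structConst_mul_one hmul hα (hs α hα)
      (hs1 ▸ S.mul_eq_left_of_map_mulLeft_eq_span (b j₀).2 hi₀ hα (hsgen α hα))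
  have hinv : ∀ β ∈ S.stabilizer (b j₀ : A), θ β β⁻¹ ≠ 0 := fun β hβ => by
    have hβ' := inv_mem hβ
    have hleft := hi₀.mul_eq_self_of_mem_map_mulLeft
      (hsgen β hβ ▸ Submodule.mem_span_singleton_self (s β))
    have hη : S.η (s β) (s β⁻¹) = θ β β⁻¹ := S.η_eq_of_mul_eq_smul (hnormzd j₀) hleft
      (by rw [hθ β β⁻¹ hβ hβ', mul_inv_cancel, hs1])
    exact hη ▸ S.η_ne_zero_of_map_mulLeft_eq_span (b j₀).2 hi₀ hβ (hsgen β hβ)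
      (hsgen β⁻¹ hβ') (hs β hβ)
  refine ⟨fun α β hα hβ => isUnit_iff_ne_zero.2 fun h0 => hinv β hβ ?_,
    fun α β γ hα hβ hγ => structConst_cocycle hmul hs hα hβ hγ, hright 1 (one_mem _)⟩
  simpa [h0, hright α hα] using (structConst_cocycle hmul hs hα hβ (inv_mem hβ)).symm

/-- Let `K` be a field of characteristic 0 and `L` a normalized
simple crossed `π`-algebra, with basis of mutually annihilating basic idempotents
of `L_1` on which `π` acts transitively and `η(i,i) = 1`. Let `i₀ = b j₀` be a
distinguished basic idempotent with stabilizer `G = {α : φ_α(i₀) = i₀}`, and for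
`α ∈ G` let `s_α` be a generator of the 1-dimensional space `i₀L_α`, with
`s_1 = i₀`. Then the structure constants `θ_{α,β}` defined by
`s_α·s_β = θ_{α,β}·s_{αβ}` are invertible, and `{θ_{α,β}}_{α,β∈G}` is a normalized
2-cocycle on `G` with values in `K*`. -/
theorem simple_crossedAlgebra_structure_constants_cocycle
    {K : Type*} [Field K] [CharZero K]
    {A : Type*} [Ring A] [Algebra K A] {G : Type*} [Group G] [DecidableEq G]
    (S : CrossedAlgebra K A G)
    {ι : Type*} (b : Module.Basis ι K (S.comp 1))
    (hidem : ∀ j, ((b j : A)) * ((b j : A)) = (b j : A))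
    (hann : ∀ j k, j ≠ k → ((b j : A)) * ((b k : A)) = 0)
    (hnormzd : ∀ j, S.η (b j : A) (b j : A) = 1)
    (htrans : ∀ j k, ∃ α : G, S.φ α (b j : A) = (b k : A))
    (j₀ : ι)
    (s : G → A)
    (hs1 : s 1 = (b j₀ : A))
    (hsgen : ∀ α : G, S.φ α (b j₀ : A) = (b j₀ : A) →
      Submodule.map (LinearMap.mulLeft K ((b j₀ : A))) (S.comp α) =
        Submodule.span K {s α})
    (θ : G → G → K)
    (hθ : ∀ α β : G, S.φ α (b j₀ : A) = (b j₀ : A) →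
      S.φ β (b j₀ : A) = (b j₀ : A) →
      s α * s β = θ α β • s (α * β)) :
    (∀ α β : G, S.φ α (b j₀ : A) = (b j₀ : A) →
      S.φ β (b j₀ : A) = (b j₀ : A) → IsUnit (θ α β)) ∧
    (∀ α β γ : G, S.φ α (b j₀ : A) = (b j₀ : A) →
      S.φ β (b j₀ : A) = (b j₀ : A) → S.φ γ (b j₀ : A) = (b j₀ : A) →
      θ α β * θ (α * β) γ = θ α (β * γ) * θ β γ) ∧
    θ 1 1 = 1 :=
  simple_crossedAlgebra_structure_constants_cocycle_general S b hidem hann hnormzd j₀ s hs1 hsgen θ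
    hθ
end
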